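/- arXiv:2210.15829 — 2 statements merged into one kernel-verified Lean document; each statement's English description precedes it below -/
import Mathlib

section
/- Let D₁ and D₂ be two independent observations with the common distribution in the partially linear model, and let h(D₁; D₂) := k(Z₁ − Z₂) P̃₁ ε₂ + k(Z₂ − Z₁) P̃₂ ε₁ − k(Z₁ − Z₂) H(X₂) ε₂ − k(Z₂ − Z₁) H(X₁) ε₁ ∈ ℝ^p be the symmetrized U-statistic kernel. Then, almost surely, E[h(D₁; D₂) | σ(D₁)] = ε₁ · G(Z₁, X₁), where G(z, x) := E[k(Z − z)(P̃ − H(x))] ∈ ℝ^p with the expectation taken over one observation (Hoeffding projection of the D-RSMD kernel). -/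
/-!
Write `h = Φ(D₁, D₂) + Φ(D₂, D₁)` with `Φ(w, v) = ε_v • k(z_w - z_v) (P̃_w - H(x_v))`. Since
`D₁` and `D₂` are independent, conditioning on `D₁` amounts to freezing `D₁` and integrating over
`D₂`. In `Φ(D₁, D₂)` the fresh error `ε₂` multiplies a bounded function of `(X₂, Z₂)`, so this
term integrates to zero by `E[ε₂ | X₂, Z₂] = 0`; in `Φ(D₂, D₁)` the factor `ε₁` comes out,
leaving `ε₁ • G(Z₁, X₁)`. Integrability holds because `|k| ≤ μ(ℝ^{q_z})` and `H` is bounded, so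
the kernel is dominated by products of independent integrable variables.
-/

open MeasureTheory ProbabilityTheory

section Independence

variable {Ω α β S E : Type*} [MeasurableSpace Ω] [MeasurableSpace α] [MeasurableSpace β]
  [MeasurableSpace S] [NormedAddCommGroup E] [NormedSpace ℝ E]
  {P : Measure Ω}

theorem condExp_comp_prodMk_ae_eq_integral_of_indepFun [CompleteSpace E] [IsProbabilityMeasure P]
    [StandardBorelSpace β] [Nonempty β]
    {W : Ω → α} {V : Ω → β} (hW : Measurable W) (hV : Measurable V) (hWV : IndepFun W V P)
    {F : α × β → E} (hF : StronglyMeasurable F) (hFi : Integrable (fun ω => F (W ω, V ω)) P) :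
    P[fun ω => F (W ω, V ω) | MeasurableSpace.comap W inferInstance]
      =ᵐ[P] fun ω => ∫ ω', F (W ω, V ω') ∂P := by
  have hlaw : condDistrib V W P =ᵐ[P.map W] Kernel.const α (P.map V) := by
    refine condDistrib_ae_eq_of_measure_eq_compProd W hV.aemeasurable ?_
    rw [Measure.compProd_const]
    exact (indepFun_iff_map_prod_eq_prod_map_map hW.aemeasurable hV.aemeasurable).mp hWV
  filter_upwards [condExp_prod_ae_eq_integral_condDistrib hW hV.aemeasurable hF hFi,
    ae_of_ae_map hW.aemeasurable hlaw] with ω hω hωlaw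
  rw [hω, hωlaw, Kernel.const_apply]
  exact integral_map hV.aemeasurable
    (hF.comp_measurable measurable_prodMk_left).aestronglyMeasurable

theorem integral_smul_comp_eq_zero_of_condExp_eq_zero [CompleteSpace E] [IsFiniteMeasure P]
    {T : Ω → S} (hT : Measurable T) {ξ : Ω → ℝ} (hξ : Integrable ξ P)
    (hξT : P[ξ | MeasurableSpace.comap T inferInstance] =ᵐ[P] 0)
    {φ : S → E} (hφ : StronglyMeasurable φ) {C : ℝ} (hφC : ∀ t, ‖φ t‖ ≤ C) :
    ∫ ω, ξ ω • φ (T ω) ∂P = 0 := by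
  have hφT : StronglyMeasurable[MeasurableSpace.comap T inferInstance] (φ ∘ T) :=
    hφ.comp_measurable (comap_measurable T)
  have hint : Integrable (ξ • (φ ∘ T)) P :=
    hξ.smul_bdd C (hφT.mono hT.comap_le).aestronglyMeasurable (ae_of_all _ fun ω => hφC _)
  calc ∫ ω, ξ ω • φ (T ω) ∂P
      = ∫ ω, (P[ξ • (φ ∘ T) | MeasurableSpace.comap T inferInstance]) ω ∂P :=
        (integral_condExp hT.comap_le).symm
    _ = ∫ ω, (P[ξ | MeasurableSpace.comap T inferInstance] • (φ ∘ T)) ω ∂P :=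
        integral_congr_ae
          (condExp_smul_of_aestronglyMeasurable_right hξ hint hφT.aestronglyMeasurable)
    _ = ∫ _, (0 : E) ∂P := integral_congr_ae <| by
        filter_upwards [hξT] with ω hω
        simp [hω]
    _ = 0 := integral_zero Ω E

/-- With `e` the residual `ε`, `s` the instrument `(X, Z)` and
`ψ w (x, z) = k (z_w - z) • (P̃_w - H x)` (`Obs.halfKernel`), `symmKernel e s ψ D₁ D₂` is the
D-RSMD kernel `h(D₁; D₂)`. -/
def symmKernel (e : α → ℝ) (s : α → S) (ψ : α → S → E) (w v : α) : E :=
  e v • ψ w (s v) + e w • ψ v (s w)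

theorem integrable_smul_comp_of_indepFun [IsProbabilityMeasure P] {W V : Ω → α}
    (hW : Measurable W) (hV : Measurable V) (hWV : IndepFun W V P)
    {e : α → ℝ} (he : Measurable e) (heV : Integrable (e ∘ V) P)
    {s : α → S} (hs : Measurable s) {ψ : α → S → E} (hψ : StronglyMeasurable (Function.uncurry ψ))
    {g : α → ℝ} (hg : Measurable g) (hgW : Integrable (g ∘ W) P) (hψg : ∀ w t, ‖ψ w t‖ ≤ g w) :
    Integrable (fun ω => e (V ω) • ψ (W ω) (s (V ω))) P := by
  refine ((hWV.symm.comp he.abs hg).integrable_mul heV.abs hgW).mono' ?_ (ae_of_all _ fun ω => ?_)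
  · exact ((he.comp hV).stronglyMeasurable.smul
      (hψ.comp_measurable (hW.prodMk (hs.comp hV)))).aestronglyMeasurable
  · rw [norm_smul, Real.norm_eq_abs]
    exact mul_le_mul_of_nonneg_left (hψg _ _) (abs_nonneg _)

theorem condExp_symmKernel_ae_eq_smul_integral [CompleteSpace E] [IsProbabilityMeasure P]
    [StandardBorelSpace α] [Nonempty α]
    {W V : Ω → α} (hW : Measurable W) (hV : Measurable V) (hWV : IndepFun W V P)
    {e : α → ℝ} (he : Measurable e) (heW : Integrable (e ∘ W) P) (heV : Integrable (e ∘ V) P)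
    {s : α → S} (hs : Measurable s)
    (hes : P[e ∘ V | MeasurableSpace.comap (s ∘ V) inferInstance] =ᵐ[P] 0)
    {ψ : α → S → E} (hψ : StronglyMeasurable (Function.uncurry ψ))
    {g : α → ℝ} (hg : Measurable g) (hgW : Integrable (g ∘ W) P) (hgV : Integrable (g ∘ V) P)
    (hψg : ∀ w t, ‖ψ w t‖ ≤ g w) :
    P[fun ω => symmKernel e s ψ (W ω) (V ω) | MeasurableSpace.comap W inferInstance]
      =ᵐ[P] fun ω => e (W ω) • ∫ ω', ψ (V ω') (s (W ω)) ∂P := by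
  have hint₁ := integrable_smul_comp_of_indepFun hW hV hWV he heV hs hψ hg hgW hψg
  have hint₂ := integrable_smul_comp_of_indepFun hV hW hWV.symm he heW hs hψ hg hgV hψg
  have hψw : ∀ w, StronglyMeasurable (ψ w) := fun w => hψ.comp_measurable measurable_prodMk_left
  have hfreeze₁ := condExp_comp_prodMk_ae_eq_integral_of_indepFun hW hV hWV
    (F := fun q => e q.2 • ψ q.1 (s q.2))
    ((he.comp measurable_snd).stronglyMeasurable.smul
      (hψ.comp_measurable (measurable_fst.prodMk (hs.comp measurable_snd)))) hint₁
  have hfreeze₂ := condExp_comp_prodMk_ae_eq_integral_of_indepFun hW hV hWV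
    (F := fun q => e q.1 • ψ q.2 (s q.1))
    ((he.comp measurable_fst).stronglyMeasurable.smul
      (hψ.comp_measurable (measurable_snd.prodMk (hs.comp measurable_fst)))) hint₂
  filter_upwards [condExp_add hint₁ hint₂ (MeasurableSpace.comap W inferInstance),
    hfreeze₁, hfreeze₂] with ω hadd h₁ h₂
  have horth : ∫ ω', e (V ω') • ψ (W ω) (s (V ω')) ∂P = 0 :=
    integral_smul_comp_eq_zero_of_condExp_eq_zero (hs.comp hV) heV hes (hψw (W ω)) (hψg (W ω))
  refine hadd.trans ?_
  rw [Pi.add_apply, h₁, h₂, integral_smul, horth, zero_add]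

end Independence

section FourierKernel

variable {n : ℕ} {μ : Measure (Fin n → ℝ)} {k : (Fin n → ℝ) → ℝ}

theorem measurable_of_ofReal_eq_integral_exp [SFinite μ]
    (hk : ∀ u, (k u : ℂ) = ∫ t, Complex.exp (Complex.I * ((t ⬝ᵥ u : ℝ) : ℂ)) ∂μ) :
    Measurable k := by
  have hint : StronglyMeasurable fun u => ∫ t, Complex.exp (Complex.I * ((t ⬝ᵥ u : ℝ) : ℂ)) ∂μ :=
    StronglyMeasurable.integral_prod_right'
      (f := fun q : (Fin n → ℝ) × (Fin n → ℝ) => Complex.exp (Complex.I * ((q.2 ⬝ᵥ q.1 : ℝ) : ℂ)))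
      (by fun_prop : Continuous _).stronglyMeasurable
  have hre : k = fun u => (∫ t, Complex.exp (Complex.I * ((t ⬝ᵥ u : ℝ) : ℂ)) ∂μ).re :=
    funext fun u => by rw [← hk u, Complex.ofReal_re]
  rw [hre]
  exact Complex.measurable_re.comp hint.measurable

theorem abs_le_of_ofReal_eq_integral_exp [IsFiniteMeasure μ]
    (hk : ∀ u, (k u : ℂ) = ∫ t, Complex.exp (Complex.I * ((t ⬝ᵥ u : ℝ) : ℂ)) ∂μ) (u : Fin n → ℝ) :
    |k u| ≤ μ.real Set.univ := by
  rw [← Real.norm_eq_abs, ← Complex.norm_real, hk u, ← one_mul (μ.real Set.univ)]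
  exact norm_integral_le_of_norm_le_const (ae_of_all _ fun t => by
    rw [Complex.norm_exp_I_mul_ofReal])

end FourierKernel

/-- An observation `(y, P, X, Z)`. -/
abbrev Obs (p qX qz : ℕ) : Type := ℝ × (Fin p → ℝ) × (Fin qX → ℝ) × (Fin qz → ℝ)

namespace Obs

variable {p qX qz : ℕ}

def residual (θ₀ : Fin p → ℝ) (f : (Fin qX → ℝ) → ℝ) (w : Obs p qX qz) : ℝ :=
  w.1 - w.2.1 ⬝ᵥ θ₀ - f w.2.2.1

def centeredRegressor (gP : (Fin qX → ℝ) → Fin p → ℝ) (w : Obs p qX qz) : Fin p → ℝ :=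
  w.2.1 - gP w.2.2.1

def instrument (w : Obs p qX qz) : (Fin qX → ℝ) × (Fin qz → ℝ) := (w.2.2.1, w.2.2.2)

def halfKernel (k : (Fin qz → ℝ) → ℝ) (H : (Fin qX → ℝ) → Fin p → ℝ)
    (gP : (Fin qX → ℝ) → Fin p → ℝ) (w : Obs p qX qz) (t : (Fin qX → ℝ) × (Fin qz → ℝ)) :
    Fin p → ℝ :=
  k (w.2.2.2 - t.2) • (w.centeredRegressor gP - H t.1)

theorem measurable_residual {θ₀ : Fin p → ℝ} {f : (Fin qX → ℝ) → ℝ} (hf : Measurable f) :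
    Measurable (residual θ₀ f : Obs p qX qz → ℝ) := by
  unfold residual
  fun_prop

theorem measurable_centeredRegressor {gP : (Fin qX → ℝ) → Fin p → ℝ} (hgP : Measurable gP) :
    Measurable (centeredRegressor gP : Obs p qX qz → Fin p → ℝ) := by
  unfold centeredRegressor
  fun_prop

theorem measurable_instrument : Measurable (instrument : Obs p qX qz → _) := by
  unfold instrument
  fun_prop

theorem stronglyMeasurable_halfKernel {k : (Fin qz → ℝ) → ℝ} {H gP : (Fin qX → ℝ) → Fin p → ℝ}
    (hk : Measurable k) (hH : Measurable H) (hgP : Measurable gP) :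
    StronglyMeasurable (Function.uncurry (halfKernel k H gP : Obs p qX qz → _)) := by
  have := measurable_centeredRegressor (qz := qz) hgP
  unfold halfKernel
  exact Measurable.stronglyMeasurable (by fun_prop)

theorem norm_halfKernel_le {k : (Fin qz → ℝ) → ℝ} {H gP : (Fin qX → ℝ) → Fin p → ℝ}
    {Ck CH : ℝ} (hk : ∀ u, |k u| ≤ Ck) (hH : ∀ x, ‖H x‖ ≤ CH) (w : Obs p qX qz)
    (t : (Fin qX → ℝ) × (Fin qz → ℝ)) :
    ‖halfKernel k H gP w t‖ ≤ Ck * (‖w.centeredRegressor gP‖ + CH) := by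
  rw [halfKernel, norm_smul, Real.norm_eq_abs]
  exact mul_le_mul (hk _) ((norm_sub_le _ _).trans (add_le_add le_rfl (hH _))) (norm_nonneg _)
    ((abs_nonneg _).trans (hk 0))

end Obs

theorem drsmd_kernel_hoeffding_projection_general
    {Ω : Type*} [MeasurableSpace Ω] (P : Measure Ω) [IsProbabilityMeasure P]
    {p qX qz : ℕ}
    (μ : Measure (Fin qz → ℝ)) [IsFiniteMeasure μ]
    (k : (Fin qz → ℝ) → ℝ)
    (hk : ∀ u, (k u : ℂ) = ∫ t, Complex.exp (Complex.I * ((t ⬝ᵥ u : ℝ) : ℂ)) ∂μ)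
    (θ₀ : Fin p → ℝ) (f : (Fin qX → ℝ) → ℝ) (hfmeas : Measurable f)
    (y : Fin 2 → Ω → ℝ) (Pv : Fin 2 → Ω → Fin p → ℝ)
    (X : Fin 2 → Ω → Fin qX → ℝ) (Z : Fin 2 → Ω → Fin qz → ℝ)
    (ε : Fin 2 → Ω → ℝ)
    (hymeas : ∀ i, Measurable (y i)) (hPmeas : ∀ i, Measurable (Pv i))
    (hXmeas : ∀ i, Measurable (X i)) (hZmeas : ∀ i, Measurable (Z i))
    (hPL2 : ∀ i, MemLp (Pv i) 2 P)
    (hεint : ∀ i, Integrable (ε i) P)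
    (hmodel : ∀ i ω, y i ω = Pv i ω ⬝ᵥ θ₀ + f (X i ω) + ε i ω)
    (hεcond : ∀ i, P[ε i | MeasurableSpace.comap (fun ω => (X i ω, Z i ω)) inferInstance]
        =ᵐ[P] 0)
    (hindep : IndepFun (fun ω => (y 0 ω, Pv 0 ω, X 0 ω, Z 0 ω))
        (fun ω => (y 1 ω, Pv 1 ω, X 1 ω, Z 1 ω)) P)
    (gP : (Fin qX → ℝ) → Fin p → ℝ)
    (hgPmeas : Measurable gP)
    (hgP : ∀ i, (fun ω => gP (X i ω))
        =ᵐ[P] P[Pv i | MeasurableSpace.comap (X i) inferInstance])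
    (Ptil : Fin 2 → Ω → Fin p → ℝ)
    (hPtil : ∀ i ω, Ptil i ω = Pv i ω - gP (X i ω))
    (a : (Fin qX → ℝ) → Fin p → ℝ) (c : (Fin qX → ℝ) → ℝ)
    (hameas : Measurable a) (hcmeas : Measurable c)
    (H : (Fin qX → ℝ) → Fin p → ℝ) (hH : ∀ x, H x = (c x)⁻¹ • a x)
    (hHbdd : ∃ C, ∀ x, ‖H x‖ ≤ C)
    (h : Ω → Fin p → ℝ)
    (hh : ∀ ω, h ω = (k (Z 0 ω - Z 1 ω) * ε 1 ω) • Ptil 0 ω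
        + (k (Z 1 ω - Z 0 ω) * ε 0 ω) • Ptil 1 ω
        - (k (Z 0 ω - Z 1 ω) * ε 1 ω) • H (X 1 ω)
        - (k (Z 1 ω - Z 0 ω) * ε 0 ω) • H (X 0 ω))
    (G : (Fin qz → ℝ) → (Fin qX → ℝ) → Fin p → ℝ)
    (hG : ∀ z x, G z x = ∫ ω, k (Z 1 ω - z) • (Ptil 1 ω - H x) ∂P)
 :
    P[h | MeasurableSpace.comap (fun ω => (y 0 ω, Pv 0 ω, X 0 ω, Z 0 ω)) inferInstance]
      =ᵐ[P] fun ω => ε 0 ω • G (Z 0 ω) (X 0 ω) := by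
  obtain ⟨CH, hCH⟩ := hHbdd
  have hHm : Measurable H := funext hH ▸ hcmeas.inv.smul hameas
  set obs : Fin 2 → Ω → Obs p qX qz := fun i ω => (y i ω, Pv i ω, X i ω, Z i ω)
  have hobs : ∀ i, Measurable (obs i) := fun i =>
    (hymeas i).prodMk ((hPmeas i).prodMk ((hXmeas i).prodMk (hZmeas i)))
  have hres : ∀ i ω, Obs.residual θ₀ f (obs i ω) = ε i ω := fun i ω => by
    simp only [Obs.residual, obs, hmodel]
    ring
  have hcr : ∀ i ω, Obs.centeredRegressor gP (obs i ω) = Ptil i ω := fun i ω =>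
    (hPtil i ω).symm
  have hεobs : ∀ i, Obs.residual θ₀ f ∘ obs i = ε i := fun i => funext (hres i)
  have hPtilint : ∀ i, Integrable (Ptil i) P := fun i => by
    rw [funext (hPtil i)]
    exact ((hPL2 i).integrable one_le_two).sub (integrable_condExp.congr (hgP i).symm)
  have hgint : ∀ i, Integrable
      ((fun w => μ.real Set.univ * (‖w.centeredRegressor gP‖ + CH)) ∘ obs i) P := fun i => by
    simp only [Function.comp_def, hcr]
    exact ((hPtilint i).norm.add (integrable_const CH)).const_mul _
  have hsymm : h = fun ω => symmKernel (Obs.residual θ₀ f) Obs.instrument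
      (Obs.halfKernel k H gP) (obs 0 ω) (obs 1 ω) := funext fun ω => by
    simp only [symmKernel, Obs.halfKernel, Obs.instrument, hres, hcr, hh ω]
    module
  rw [hsymm]
  refine (condExp_symmKernel_ae_eq_smul_integral (hobs 0) (hobs 1) hindep
    (Obs.measurable_residual hfmeas) (hεobs 0 ▸ hεint 0) (hεobs 1 ▸ hεint 1)
    Obs.measurable_instrument (hεobs 1 ▸ hεcond 1)
    (Obs.stronglyMeasurable_halfKernel (measurable_of_ofReal_eq_integral_exp hk) hHm hgPmeas)
    (((Obs.measurable_centeredRegressor hgPmeas).norm.add_const CH).const_mul _)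
    (hgint 0) (hgint 1) (Obs.norm_halfKernel_le (abs_le_of_ofReal_eq_integral_exp hk) hCH)).trans
    (ae_of_all _ fun ω => ?_)
  simp only [Obs.halfKernel, Obs.instrument, hG, hres, hcr]
  rfl

/-- Hoeffding projection of the D-RSMD kernel: almost surely,
`E[h(D₁; D₂) | σ(D₁)] = ε₁ · G(Z₁, X₁)` where `G(z,x) = E[k(Z − z)(P̃ − H(x))]`. -/
theorem drsmd_kernel_hoeffding_projection
    {Ω : Type*} [MeasurableSpace Ω] (P : Measure Ω) [IsProbabilityMeasure P]
    {p qX qz : ℕ}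
    (μ : Measure (Fin qz → ℝ)) [IsFiniteMeasure μ]
    (hμsymm : μ.map (fun t => -t) = μ)
    (k : (Fin qz → ℝ) → ℝ)
    (hk : ∀ u, (k u : ℂ) = ∫ t, Complex.exp (Complex.I * ((t ⬝ᵥ u : ℝ) : ℂ)) ∂μ)
    (θ₀ : Fin p → ℝ) (f : (Fin qX → ℝ) → ℝ) (hfmeas : Measurable f)
    (y : Fin 2 → Ω → ℝ) (Pv : Fin 2 → Ω → Fin p → ℝ)
    (X : Fin 2 → Ω → Fin qX → ℝ) (Z : Fin 2 → Ω → Fin qz → ℝ)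
    (ε : Fin 2 → Ω → ℝ)
    (hymeas : ∀ i, Measurable (y i)) (hPmeas : ∀ i, Measurable (Pv i))
    (hXmeas : ∀ i, Measurable (X i)) (hZmeas : ∀ i, Measurable (Z i))
    (hyL2 : ∀ i, MemLp (y i) 2 P) (hPL2 : ∀ i, MemLp (Pv i) 2 P)
    (hXL2 : ∀ i, MemLp (X i) 2 P) (hZL2 : ∀ i, MemLp (Z i) 2 P)
    (hεint : ∀ i, Integrable (ε i) P)
    (hmodel : ∀ i ω, y i ω = Pv i ω ⬝ᵥ θ₀ + f (X i ω) + ε i ω)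
    (hεcond : ∀ i, P[ε i | MeasurableSpace.comap (fun ω => (X i ω, Z i ω)) inferInstance]
        =ᵐ[P] 0)
    (hindep : IndepFun (fun ω => (y 0 ω, Pv 0 ω, X 0 ω, Z 0 ω))
        (fun ω => (y 1 ω, Pv 1 ω, X 1 ω, Z 1 ω)) P)
    (hident : IdentDistrib (fun ω => (y 0 ω, Pv 0 ω, X 0 ω, Z 0 ω))
        (fun ω => (y 1 ω, Pv 1 ω, X 1 ω, Z 1 ω)) P P)
    (gy : (Fin qX → ℝ) → ℝ) (gP : (Fin qX → ℝ) → Fin p → ℝ)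
    (hgymeas : Measurable gy) (hgPmeas : Measurable gP)
    (hgy : ∀ i, (fun ω => gy (X i ω))
        =ᵐ[P] P[y i | MeasurableSpace.comap (X i) inferInstance])
    (hgP : ∀ i, (fun ω => gP (X i ω))
        =ᵐ[P] P[Pv i | MeasurableSpace.comap (X i) inferInstance])
    (ytil : Fin 2 → Ω → ℝ) (Ptil : Fin 2 → Ω → Fin p → ℝ)
    (hytil : ∀ i ω, ytil i ω = y i ω - gy (X i ω))
    (hPtil : ∀ i ω, Ptil i ω = Pv i ω - gP (X i ω))
    (a : (Fin qX → ℝ) → Fin p → ℝ) (c : (Fin qX → ℝ) → ℝ)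
    (hameas : Measurable a) (hcmeas : Measurable c)
    (ha : ∀ i j, i ≠ j → (fun ω => a (X j ω)) =ᵐ[P]
        P[(fun ω => k (Z i ω - Z j ω) • Ptil i ω) |
          MeasurableSpace.comap (X j) inferInstance])
    (hc : ∀ i j, i ≠ j → (fun ω => c (X j ω)) =ᵐ[P]
        P[(fun ω => k (Z i ω - Z j ω)) | MeasurableSpace.comap (X j) inferInstance])
    (hcne : ∀ i, ∀ᵐ ω ∂P, c (X i ω) ≠ 0)
    (H : (Fin qX → ℝ) → Fin p → ℝ) (hH : ∀ x, H x = (c x)⁻¹ • a x)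
    (hHbdd : ∃ C, ∀ x, ‖H x‖ ≤ C)
    (h : Ω → Fin p → ℝ)
    (hh : ∀ ω, h ω = (k (Z 0 ω - Z 1 ω) * ε 1 ω) • Ptil 0 ω
        + (k (Z 1 ω - Z 0 ω) * ε 0 ω) • Ptil 1 ω
        - (k (Z 0 ω - Z 1 ω) * ε 1 ω) • H (X 1 ω)
        - (k (Z 1 ω - Z 0 ω) * ε 0 ω) • H (X 0 ω))
    (G : (Fin qz → ℝ) → (Fin qX → ℝ) → Fin p → ℝ)
    (hG : ∀ z x, G z x = ∫ ω, k (Z 1 ω - z) • (Ptil 1 ω - H x) ∂P)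
 :
    P[h | MeasurableSpace.comap (fun ω => (y 0 ω, Pv 0 ω, X 0 ω, Z 0 ω)) inferInstance]
      =ᵐ[P] fun ω => ε 0 ω • G (Z 0 ω) (X 0 ω) :=
  drsmd_kernel_hoeffding_projection_general P μ k hk θ₀ f hfmeas y Pv X Z ε hymeas hPmeas hXmeas
    hZmeas hPL2 hεint hmodel hεcond hindep gP hgPmeas hgP Ptil hPtil a c hameas hcmeas H hH hHbdd h
    hh G hG
end

section
/- Let D₁ and D₂ be two independent observations with the common distribution in the partially linear model, with ε square-integrable. Define the ℝ^p-valued random vector h₁ := ∫_{ℝ^{q_z}} exp(−i⟨t, Z₁⟩) · ε₁ · (E[P̃₂ exp(i⟨t, Z₂⟩)] − H(X₁) · E[exp(i⟨t, Z₂⟩)]) dμ(t). Then h₁ = ε₁ · G(Z₁, X₁) almost surely (in particular h₁ is real-valued), E[h₁] = 0, and the covariance matrix of h₁ equals E[ε₁² · G(Z₁, X₁) G(Z₁, X₁)ᵀ], where G(z, x) := E[k(Z − z)(P̃ − H(x))] ∈ ℝ^p with the expectation over one observation (the variance representation used for the heteroskedasticity-robust variance estimator). -/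
open MeasureTheory ProbabilityTheory Filter Topology Complex Matrix NNReal ENNReal

/-!
Because `k` is the Fourier transform of the finite measure `μ`, integrating
`exp(-i⟨t,z⟩) · exp(i⟨t,Z₂⟩)` in `t` gives `k(Z₂ - z)`. By Fubini (the integrand is bounded by
the integrable `|P̃₂ - H(x)|` and `μ` is finite) the `t`-integral defining `h₁` therefore equals
`ε₁ · E₂[k(Z₂ - Z₁)(P̃₂ - H(X₁))] = ε₁ · G(Z₁, X₁)` at every `ω`. The covariance formula is then
immediate, and `E[ε₁ G(Z₁, X₁)] = 0` because `G(Z₁, X₁)` is bounded and `σ(X₁, Z₁)`-measurable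
while `E[ε₁ | X₁, Z₁] = 0`. Measurability of `G` needs no measurability of `P̃₂`: writing
`G(z, x) = E[k(Z₂ - z) P̃₂] - E[k(Z₂ - z)] H(x)`, both expectations are continuous in `z`
since `k` is.
-/

def IsRealCharFun {n : ℕ} (μ : Measure (Fin n → ℝ)) (k : (Fin n → ℝ) → ℝ) : Prop :=
  ∀ u, (k u : ℂ) = ∫ t, exp (I * ((t ⬝ᵥ u : ℝ) : ℂ)) ∂μ

namespace IsRealCharFun

variable {n : ℕ} {μ : Measure (Fin n → ℝ)} [IsFiniteMeasure μ] {k : (Fin n → ℝ) → ℝ}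

lemma continuous (hk : IsRealCharFun μ k) : Continuous k := by
  have hcont : Continuous fun u => ∫ t, exp (I * ((t ⬝ᵥ u : ℝ) : ℂ)) ∂μ :=
    continuous_of_dominated (fun _ => (by fun_prop : Continuous _).aestronglyMeasurable)
      (fun _ => ae_of_all _ fun _ => (norm_exp_I_mul_ofReal _).le) (integrable_const 1)
      (ae_of_all _ fun _ => by fun_prop)
  convert continuous_re.comp hcont
  ext u
  simp [← hk u]

lemma abs_le (hk : IsRealCharFun μ k) (u : Fin n → ℝ) :
    |k u| ≤ μ.real Set.univ := by
  simpa [← hk u] using norm_integral_le_of_norm_le_const (μ := μ) (C := 1)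
    (ae_of_all _ fun t => (norm_exp_I_mul_ofReal (t ⬝ᵥ u)).le)

variable {Ω : Type*} [MeasurableSpace Ω] {P : Measure Ω} {V : Ω → Fin n → ℝ}

lemma integral_exp_neg_mul_integral_mul_exp [SFinite P]
    (hk : IsRealCharFun μ k) (hV : Measurable V)
    {w : Ω → ℝ} (hw : Integrable w P) (z : Fin n → ℝ) :
    ∫ t, exp (-(I * ((t ⬝ᵥ z : ℝ) : ℂ))) * ∫ ω, (w ω : ℂ) * exp (I * ((t ⬝ᵥ V ω : ℝ) : ℂ)) ∂P ∂μ
      = ((∫ ω, k (V ω - z) * w ω ∂P : ℝ) : ℂ) := by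
  have hshift : ∀ ω t,
      exp (-(I * ((t ⬝ᵥ z : ℝ) : ℂ))) * ((w ω : ℂ) * exp (I * ((t ⬝ᵥ V ω : ℝ) : ℂ)))
        = (w ω : ℂ) * exp (I * ((t ⬝ᵥ (V ω - z) : ℝ) : ℂ)) := fun ω t => by
    rw [dotProduct_sub, Complex.ofReal_sub, mul_sub, sub_eq_neg_add, exp_add]
    ring
  have hint : Integrable
      (Function.uncurry fun ω t => (w ω : ℂ) * exp (I * ((t ⬝ᵥ (V ω - z) : ℝ) : ℂ))) (P.prod μ) :=
    ((hw.ofReal (𝕜 := ℂ)).comp_fst μ).mul_bdd (c := 1) (by fun_prop)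
      (ae_of_all _ fun _ => (norm_exp_I_mul_ofReal _).le)
  calc _ = ∫ t, ∫ ω, (w ω : ℂ) * exp (I * ((t ⬝ᵥ (V ω - z) : ℝ) : ℂ)) ∂P ∂μ := by
        simp_rw [← integral_const_mul, hshift]
    _ = ∫ ω, ∫ t, (w ω : ℂ) * exp (I * ((t ⬝ᵥ (V ω - z) : ℝ) : ℂ)) ∂μ ∂P :=
        (integral_integral_swap hint).symm
    _ = ∫ ω, ((k (V ω - z) * w ω : ℝ) : ℂ) ∂P := by
        simp_rw [integral_const_mul, ← hk _, Complex.ofReal_mul, mul_comm]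
    _ = _ := integral_ofReal

lemma integral_exp_neg_mul_mul_sub [IsFiniteMeasure P]
    (hk : IsRealCharFun μ k) (hV : Measurable V)
    {q : Ω → ℝ} (hq : Integrable q P) (z : Fin n → ℝ) (e h : ℝ) :
    ∫ t, exp (-(I * ((t ⬝ᵥ z : ℝ) : ℂ))) * (e : ℂ) *
        ((∫ ω, (q ω : ℂ) * exp (I * ((t ⬝ᵥ V ω : ℝ) : ℂ)) ∂P)
          - (h : ℂ) * ∫ ω, exp (I * ((t ⬝ᵥ V ω : ℝ) : ℂ)) ∂P) ∂μ
      = ((e * ∫ ω, k (V ω - z) * (q ω - h) ∂P : ℝ) : ℂ) := by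
  have hsub : ∀ t : Fin n → ℝ, (∫ ω, (q ω : ℂ) * exp (I * ((t ⬝ᵥ V ω : ℝ) : ℂ)) ∂P)
        - (h : ℂ) * ∫ ω, exp (I * ((t ⬝ᵥ V ω : ℝ) : ℂ)) ∂P
      = ∫ ω, ((q ω - h : ℝ) : ℂ) * exp (I * ((t ⬝ᵥ V ω : ℝ) : ℂ)) ∂P := fun t => by
    have hexp : Integrable (fun ω => exp (I * ((t ⬝ᵥ V ω : ℝ) : ℂ))) P :=
      .of_bound (by fun_prop) 1 (ae_of_all _ fun _ => (norm_exp_I_mul_ofReal _).le)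
    simp_rw [Complex.ofReal_sub, sub_mul]
    rw [integral_sub ?_ (hexp.const_mul _), integral_const_mul]
    exact (hq.ofReal (𝕜 := ℂ)).mul_bdd hexp.1 (ae_of_all _ fun _ => (norm_exp_I_mul_ofReal _).le)
  calc _ = ∫ t, (e : ℂ) * (exp (-(I * ((t ⬝ᵥ z : ℝ) : ℂ))) *
        ∫ ω, ((q ω - h : ℝ) : ℂ) * exp (I * ((t ⬝ᵥ V ω : ℝ) : ℂ)) ∂P) ∂μ := by
        refine integral_congr_ae (ae_of_all _ fun t => ?_)
        simp only [hsub]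
        ring
    _ = _ := by
        have hqh : Integrable (fun ω => q ω - h) P := hq.sub (integrable_const h)
        rw [integral_const_mul, hk.integral_exp_neg_mul_integral_mul_exp hV hqh,
          Complex.ofReal_mul]

variable {E : Type*} [NormedAddCommGroup E] [NormedSpace ℝ E] {Q : Ω → E}

lemma integrable_smul (hk : IsRealCharFun μ k) (hV : Measurable V)
    (hQ : Integrable Q P) (z : Fin n → ℝ) : Integrable (fun ω => k (V ω - z) • Q ω) P :=
  hQ.bdd_smul _ (hk.continuous.measurable.comp (hV.sub_const z)).aestronglyMeasurable
    (ae_of_all _ fun _ => hk.abs_le _)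

lemma continuous_integral_smul [CompleteSpace E] (hk : IsRealCharFun μ k) (hV : Measurable V)
    (hQ : Integrable Q P) : Continuous fun z => ∫ ω, k (V ω - z) • Q ω ∂P :=
  continuous_of_dominated (fun z => (hk.integrable_smul hV hQ z).1)
    (fun z => ae_of_all _ fun ω => by
      rw [norm_smul]
      exact mul_le_mul_of_nonneg_right (hk.abs_le _) (norm_nonneg _))
    (hQ.norm.const_mul _)
    (ae_of_all _ fun _ => by have := hk.continuous; fun_prop)

lemma integral_smul_sub [CompleteSpace E] [IsFiniteMeasure P]
    (hk : IsRealCharFun μ k) (hV : Measurable V)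
    (hQ : Integrable Q P) (z : Fin n → ℝ) (h : E) :
    ∫ ω, k (V ω - z) • (Q ω - h) ∂P
      = ∫ ω, k (V ω - z) • Q ω ∂P - (∫ ω, k (V ω - z) ∂P) • h := by
  have hk' : Integrable (fun ω => k (V ω - z)) P := by
    simpa using hk.integrable_smul hV (integrable_const (1 : ℝ)) z
  simp_rw [smul_sub]
  rw [integral_sub (hk.integrable_smul hV hQ z) (hk'.smul_const h), integral_smul_const]

lemma stronglyMeasurable_integral_smul_sub [CompleteSpace E] [IsFiniteMeasure P] {α : Type*}
    [MeasurableSpace α] {H : α → E}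
    (hk : IsRealCharFun μ k) (hV : Measurable V)
    (hQ : Integrable Q P) (hH : StronglyMeasurable H) :
    StronglyMeasurable fun x : α × (Fin n → ℝ) => ∫ ω, k (V ω - x.2) • (Q ω - H x.1) ∂P := by
  simp_rw [hk.integral_smul_sub hV hQ]
  have hc := hk.continuous_integral_smul hV (integrable_const (1 : ℝ) (μ := P))
  simp only [smul_eq_mul, mul_one] at hc
  exact ((hk.continuous_integral_smul hV hQ).stronglyMeasurable.comp_measurable
    measurable_snd).sub ((hc.stronglyMeasurable.comp_measurable measurable_snd).smul
      (hH.comp_measurable measurable_fst))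

lemma norm_integral_smul_sub_le [IsProbabilityMeasure P] (hk : IsRealCharFun μ k)
    (hQ : Integrable Q P) (z : Fin n → ℝ) (h : E) :
    ‖∫ ω, k (V ω - z) • (Q ω - h) ∂P‖ ≤ μ.real Set.univ * ((∫ ω, ‖Q ω‖ ∂P) + ‖h‖) := by
  have hbound : Integrable (fun ω => μ.real Set.univ * (‖Q ω‖ + ‖h‖)) P :=
    (hQ.norm.add (integrable_const _)).const_mul _
  refine (norm_integral_le_of_norm_le hbound (ae_of_all _ fun ω => ?_)).trans_eq ?_
  · rw [norm_smul]
    exact mul_le_mul (hk.abs_le _) (norm_sub_le _ _) (norm_nonneg _) measureReal_nonneg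
  · rw [integral_const_mul, integral_add hQ.norm (integrable_const _), integral_const]
    simp

lemma integral_smul_sub_apply {p : ℕ} [IsFiniteMeasure P] {Q : Ω → Fin p → ℝ}
    (hk : IsRealCharFun μ k) (hV : Measurable V) (hQ : Integrable Q P) (z : Fin n → ℝ)
    (h : Fin p → ℝ) (i : Fin p) :
    (∫ ω, k (V ω - z) • (Q ω - h) ∂P) i = ∫ ω, k (V ω - z) * (Q ω i - h i) ∂P :=
  eval_integral (hk.integrable_smul hV (hQ.sub (integrable_const h)) z).eval i

end IsRealCharFun

lemma integral_mul_eq_zero_of_condExp_eq_zero {Ω : Type*} {m m₀ : MeasurableSpace Ω}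
    {P : Measure Ω} [IsFiniteMeasure P] (hm : m ≤ m₀) {g ε : Ω → ℝ} {C : ℝ}
    (hg : StronglyMeasurable[m] g) (hgC : ∀ᵐ ω ∂P, ‖g ω‖ ≤ C) (hε : Integrable ε P)
    (hεm : P[ε | m] =ᵐ[P] 0) : ∫ ω, g ω * ε ω ∂P = 0 := by
  calc ∫ ω, g ω * ε ω ∂P = ∫ ω, (P[g * ε | m]) ω ∂P := (integral_condExp hm).symm
    _ = ∫ ω, (g * P[ε | m]) ω ∂P :=
        integral_congr_ae (condExp_stronglyMeasurable_mul_of_bound hm hg hε C hgC)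
    _ = 0 := by
        have hzero : g * P[ε | m] =ᵐ[P] 0 := hεm.mono fun ω hω => by simp [hω]
        exact (integral_congr_ae hzero).trans (by simp)

theorem drsmd_projection_variance_representation_general
    {Ω : Type*} [MeasurableSpace Ω] (P : Measure Ω) [IsProbabilityMeasure P]
    {p qX qz : ℕ}
    (μ : Measure (Fin qz → ℝ)) [IsFiniteMeasure μ]
    (k : (Fin qz → ℝ) → ℝ)
    (hk : ∀ u, (k u : ℂ) = ∫ t, Complex.exp (Complex.I * ((t ⬝ᵥ u : ℝ) : ℂ)) ∂μ)
    (Pv : Fin 2 → Ω → Fin p → ℝ)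
    (X : Fin 2 → Ω → Fin qX → ℝ) (Z : Fin 2 → Ω → Fin qz → ℝ)
    (ε : Fin 2 → Ω → ℝ)
    (hXmeas : ∀ i, Measurable (X i)) (hZmeas : ∀ i, Measurable (Z i))
    (hPL2 : ∀ i, MemLp (Pv i) 2 P)
    (hεint : ∀ i, Integrable (ε i) P)
    (hεcond : ∀ i, P[ε i | MeasurableSpace.comap (fun ω => (X i ω, Z i ω)) inferInstance]
        =ᵐ[P] 0)
    (gP : (Fin qX → ℝ) → Fin p → ℝ)
    (hgP : ∀ i, (fun ω => gP (X i ω))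
        =ᵐ[P] P[Pv i | MeasurableSpace.comap (X i) inferInstance])
    (Ptil : Fin 2 → Ω → Fin p → ℝ)
    (hPtil : ∀ i ω, Ptil i ω = Pv i ω - gP (X i ω))
    (a : (Fin qX → ℝ) → Fin p → ℝ) (c : (Fin qX → ℝ) → ℝ)
    (hameas : Measurable a) (hcmeas : Measurable c)
    (H : (Fin qX → ℝ) → Fin p → ℝ) (hH : ∀ x, H x = (c x)⁻¹ • a x)
    (hHbdd : ∃ C, ∀ x, ‖H x‖ ≤ C)
    (G : (Fin qz → ℝ) → (Fin qX → ℝ) → Fin p → ℝ)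
    (hG : ∀ z x, G z x = ∫ ω, k (Z 1 ω - z) • (Ptil 1 ω - H x) ∂P)
    (h1 : Ω → Fin p → ℂ)
    (hh1 : ∀ ω i, h1 ω i =
        ∫ t, Complex.exp (-(Complex.I * ((t ⬝ᵥ Z 0 ω : ℝ) : ℂ))) * (ε 0 ω : ℂ) *
          ((∫ ω', ((Ptil 1 ω' i : ℝ) : ℂ) *
              Complex.exp (Complex.I * ((t ⬝ᵥ Z 1 ω' : ℝ) : ℂ)) ∂P)
            - ((H (X 0 ω) i : ℝ) : ℂ) *
              (∫ ω', Complex.exp (Complex.I * ((t ⬝ᵥ Z 1 ω' : ℝ) : ℂ)) ∂P)) ∂μ)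
 :
    (∀ᵐ ω ∂P, ∀ i, h1 ω i = ((ε 0 ω * G (Z 0 ω) (X 0 ω) i : ℝ) : ℂ)) ∧
    (∀ i, ∫ ω, h1 ω i ∂P = 0) ∧
    (∀ i j, ∫ ω, h1 ω i * (starRingEnd ℂ) (h1 ω j) ∂P
        = ((∫ ω, ε 0 ω ^ 2 * (G (Z 0 ω) (X 0 ω) i * G (Z 0 ω) (X 0 ω) j) ∂P : ℝ) : ℂ)) := by
  replace hk : IsRealCharFun μ k := hk
  obtain ⟨C, hC⟩ := hHbdd
  have hPtil_int : Integrable (Ptil 1) P := by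
    rw [funext (hPtil 1)]
    exact ((hPL2 1).integrable one_le_two).sub (integrable_condExp.congr (hgP 1).symm)
  have hH_meas : StronglyMeasurable H := by
    rw [funext hH]
    exact (hcmeas.inv.smul hameas).stronglyMeasurable
  have hrep : ∀ ω i, h1 ω i = ((ε 0 ω * G (Z 0 ω) (X 0 ω) i : ℝ) : ℂ) := fun ω i => by
    rw [hh1, hk.integral_exp_neg_mul_mul_sub (hZmeas 1) (hPtil_int.eval i), hG,
      hk.integral_smul_sub_apply (hZmeas 1) hPtil_int]
  have hmean : ∀ i, ∫ ω, ε 0 ω * G (Z 0 ω) (X 0 ω) i ∂P = 0 := fun i => by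
    have hG_meas : StronglyMeasurable fun x : (Fin qX → ℝ) × (Fin qz → ℝ) => G x.2 x.1 := by
      simp_rw [hG]
      exact hk.stronglyMeasurable_integral_smul_sub (hZmeas 1) hPtil_int hH_meas
    have hG_bdd : ∀ z x, ‖G z x i‖ ≤ μ.real Set.univ * ((∫ ω, ‖Ptil 1 ω‖ ∂P) + C) := fun z x =>
      calc ‖G z x i‖ ≤ ‖G z x‖ := norm_le_pi_norm _ i
        _ ≤ μ.real Set.univ * ((∫ ω, ‖Ptil 1 ω‖ ∂P) + ‖H x‖) := by
            rw [hG]; exact hk.norm_integral_smul_sub_le hPtil_int _ _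
        _ ≤ μ.real Set.univ * ((∫ ω, ‖Ptil 1 ω‖ ∂P) + C) := by gcongr; exact hC _
    simp_rw [mul_comm (ε 0 _)]
    exact integral_mul_eq_zero_of_condExp_eq_zero ((hXmeas 0).prodMk (hZmeas 0)).comap_le
      (((continuous_apply i).comp_stronglyMeasurable hG_meas).comp_measurable
        (Measurable.of_comap_le le_rfl)) (ae_of_all _ fun _ => hG_bdd _ _) (hεint 0) (hεcond 0)
  refine ⟨ae_of_all _ fun ω i => hrep ω i, fun i => ?_, fun i j => ?_⟩
  · simp_rw [hrep, integral_complex_ofReal, hmean, Complex.ofReal_zero]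
  · simp_rw [hrep, Complex.conj_ofReal, ← Complex.ofReal_mul, integral_complex_ofReal]
    congr 2 with ω
    ring

/-- Variance representation of the Hoeffding projection: the complex-valued vector
`h₁ = ∫ exp(−i⟨t,Z₁⟩) ε₁ (E[P̃₂ exp(i⟨t,Z₂⟩)] − H(X₁) E[exp(i⟨t,Z₂⟩)]) dμ(t)` satisfies
`h₁ = ε₁ G(Z₁,X₁)` a.s. (in particular it is real-valued), `E[h₁] = 0`, and its covariance
matrix is `E[ε₁² G(Z₁,X₁) G(Z₁,X₁)ᵀ]`. -/
theorem drsmd_projection_variance_representation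
    {Ω : Type*} [MeasurableSpace Ω] (P : Measure Ω) [IsProbabilityMeasure P]
    {p qX qz : ℕ}
    (μ : Measure (Fin qz → ℝ)) [IsFiniteMeasure μ]
    (hμsymm : μ.map (fun t => -t) = μ)
    (k : (Fin qz → ℝ) → ℝ)
    (hk : ∀ u, (k u : ℂ) = ∫ t, Complex.exp (Complex.I * ((t ⬝ᵥ u : ℝ) : ℂ)) ∂μ)
    (θ₀ : Fin p → ℝ) (f : (Fin qX → ℝ) → ℝ) (hfmeas : Measurable f)
    (y : Fin 2 → Ω → ℝ) (Pv : Fin 2 → Ω → Fin p → ℝ)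
    (X : Fin 2 → Ω → Fin qX → ℝ) (Z : Fin 2 → Ω → Fin qz → ℝ)
    (ε : Fin 2 → Ω → ℝ)
    (hymeas : ∀ i, Measurable (y i)) (hPmeas : ∀ i, Measurable (Pv i))
    (hXmeas : ∀ i, Measurable (X i)) (hZmeas : ∀ i, Measurable (Z i))
    (hyL2 : ∀ i, MemLp (y i) 2 P) (hPL2 : ∀ i, MemLp (Pv i) 2 P)
    (hXL2 : ∀ i, MemLp (X i) 2 P) (hZL2 : ∀ i, MemLp (Z i) 2 P)
    (hεint : ∀ i, Integrable (ε i) P)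
    (hmodel : ∀ i ω, y i ω = Pv i ω ⬝ᵥ θ₀ + f (X i ω) + ε i ω)
    (hεcond : ∀ i, P[ε i | MeasurableSpace.comap (fun ω => (X i ω, Z i ω)) inferInstance]
        =ᵐ[P] 0)
    (hindep : IndepFun (fun ω => (y 0 ω, Pv 0 ω, X 0 ω, Z 0 ω))
        (fun ω => (y 1 ω, Pv 1 ω, X 1 ω, Z 1 ω)) P)
    (hident : IdentDistrib (fun ω => (y 0 ω, Pv 0 ω, X 0 ω, Z 0 ω))
        (fun ω => (y 1 ω, Pv 1 ω, X 1 ω, Z 1 ω)) P P)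
    (gy : (Fin qX → ℝ) → ℝ) (gP : (Fin qX → ℝ) → Fin p → ℝ)
    (hgymeas : Measurable gy) (hgPmeas : Measurable gP)
    (hgy : ∀ i, (fun ω => gy (X i ω))
        =ᵐ[P] P[y i | MeasurableSpace.comap (X i) inferInstance])
    (hgP : ∀ i, (fun ω => gP (X i ω))
        =ᵐ[P] P[Pv i | MeasurableSpace.comap (X i) inferInstance])
    (ytil : Fin 2 → Ω → ℝ) (Ptil : Fin 2 → Ω → Fin p → ℝ)
    (hytil : ∀ i ω, ytil i ω = y i ω - gy (X i ω))
    (hPtil : ∀ i ω, Ptil i ω = Pv i ω - gP (X i ω))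
    (a : (Fin qX → ℝ) → Fin p → ℝ) (c : (Fin qX → ℝ) → ℝ)
    (hameas : Measurable a) (hcmeas : Measurable c)
    (ha : ∀ i j, i ≠ j → (fun ω => a (X j ω)) =ᵐ[P]
        P[(fun ω => k (Z i ω - Z j ω) • Ptil i ω) |
          MeasurableSpace.comap (X j) inferInstance])
    (hc : ∀ i j, i ≠ j → (fun ω => c (X j ω)) =ᵐ[P]
        P[(fun ω => k (Z i ω - Z j ω)) | MeasurableSpace.comap (X j) inferInstance])
    (hcne : ∀ i, ∀ᵐ ω ∂P, c (X i ω) ≠ 0)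
    (H : (Fin qX → ℝ) → Fin p → ℝ) (hH : ∀ x, H x = (c x)⁻¹ • a x)
    (hHbdd : ∃ C, ∀ x, ‖H x‖ ≤ C)
    (G : (Fin qz → ℝ) → (Fin qX → ℝ) → Fin p → ℝ)
    (hG : ∀ z x, G z x = ∫ ω, k (Z 1 ω - z) • (Ptil 1 ω - H x) ∂P)
    (hεL2 : ∀ i, MemLp (ε i) 2 P)
    (h1 : Ω → Fin p → ℂ)
    (hh1 : ∀ ω i, h1 ω i =
        ∫ t, Complex.exp (-(Complex.I * ((t ⬝ᵥ Z 0 ω : ℝ) : ℂ))) * (ε 0 ω : ℂ) *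
          ((∫ ω', ((Ptil 1 ω' i : ℝ) : ℂ) *
              Complex.exp (Complex.I * ((t ⬝ᵥ Z 1 ω' : ℝ) : ℂ)) ∂P)
            - ((H (X 0 ω) i : ℝ) : ℂ) *
              (∫ ω', Complex.exp (Complex.I * ((t ⬝ᵥ Z 1 ω' : ℝ) : ℂ)) ∂P)) ∂μ)
 :
    (∀ᵐ ω ∂P, ∀ i, h1 ω i = ((ε 0 ω * G (Z 0 ω) (X 0 ω) i : ℝ) : ℂ)) ∧
    (∀ i, ∫ ω, h1 ω i ∂P = 0) ∧
    (∀ i j, ∫ ω, h1 ω i * (starRingEnd ℂ) (h1 ω j) ∂P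
        = ((∫ ω, ε 0 ω ^ 2 * (G (Z 0 ω) (X 0 ω) i * G (Z 0 ω) (X 0 ω) j) ∂P : ℝ) : ℂ)) :=
  drsmd_projection_variance_representation_general P μ k hk Pv X Z ε hXmeas hZmeas hPL2 hεint hεcond
    gP hgP Ptil hPtil a c hameas hcmeas H hH hHbdd G hG h1 hh1
end
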